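/- In a residuated lattice, every coannihilator (a filter of the form X^⊥ for some subset X) is an α-filter, and every minimal prime filter is an α-filter. -/

import Mathlib

/-- A (bounded, integral, commutative) residuated lattice. -/
class ResLattice (A : Type*) extends Lattice A, CommMonoid A, OrderBot A where
  himp : A → A → A
  adjunction : ∀ x y z : A, x * y ≤ z ↔ x ≤ himp y z
  le_one : ∀ x : A, x ≤ 1

variable {A : Type*} [ResLattice A]

/-- Coannihilator of a subset: `X^⊥ = {a | a ⊔ x = 1 for all x ∈ X}`. -/
def Coann (X : Set A) : Set A := {a | ∀ x ∈ X, a ⊔ x = 1}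

/-- Coannulet of an element: `x^⊥`. -/
def rperp (x : A) : Set A := Coann {x}

/-- The principal filter generated by `x`. -/
def PFil (x : A) : Set A := {a | ∃ n : ℕ, 0 < n ∧ x ^ n ≤ a}

/-- Filters of a residuated lattice. -/
def IsRLFilter (F : Set A) : Prop :=
  F.Nonempty ∧ (∀ x ∈ F, ∀ y ∈ F, x * y ∈ F) ∧ (∀ x ∈ F, ∀ y : A, x ⊔ y ∈ F)

/-- Prime filters. -/
def IsRLPrime (P : Set A) : Prop :=
  IsRLFilter P ∧ P ≠ Set.univ ∧ ∀ x y : A, x ⊔ y ∈ P → x ∈ P ∨ y ∈ P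

/-- Minimal prime filters. -/
def IsRLMinPrime (P : Set A) : Prop :=
  IsRLPrime P ∧ ∀ Q : Set A, IsRLPrime Q → Q ⊆ P → Q = P

/-- Quasicomplemented residuated lattice. -/
def Quasicomplemented (A : Type*) [ResLattice A] : Prop :=
  ∀ x : A, ∃ y : A, Coann (rperp x) = rperp y

/-- α-filters. -/
def IsAlphaFilter (F : Set A) : Prop :=
  IsRLFilter F ∧ ∀ x ∈ F, Coann (rperp x) ⊆ F

/-- The α-filter generated by a subset. -/
def alphaGen (X : Set A) : Set A := ⋂₀ {G : Set A | IsAlphaFilter G ∧ X ⊆ G}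

/-!
Coannihilators: if `a ∈ X^⊥` then `X ⊆ a^⊥`, so `a^⊥⊥ ⊆ X^⊥` by antitonicity of `⊥`.

Minimal primes: for `x` in a minimal prime `P` there is some `d ∉ P` with `x ⊔ d = 1`. Otherwise
the lattice ideal generated by `x` and the complement of `P` misses `1`, and a prime filter
avoiding it (Zorn) would be a prime filter strictly below `P`. Given such a `d`, every
`b ∈ x^⊥⊥` satisfies `b ⊔ d = 1 ∈ P`, so `b ∈ P` by primality.
-/

namespace ResLattice

instance : IsOrderedMonoid A where
  mul_le_mul_left a b hab c :=
    (adjunction a c (b * c)).mpr (hab.trans ((adjunction b c (b * c)).mp le_rfl))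

theorem mul_le_left (a b : A) : a * b ≤ a :=
  mul_le_of_le_one_right' (le_one b)

theorem mul_le_right (a b : A) : a * b ≤ b :=
  mul_le_of_le_one_left' (le_one a)

theorem sup_eq_one_of_le {a b : A} (h : 1 ≤ a ⊔ b) : a ⊔ b = 1 :=
  (le_one _).antisymm h

protected theorem mul_sup (a b c : A) : a * (b ⊔ c) = a * b ⊔ a * c := by
  refine le_antisymm ?_ (sup_le (mul_le_mul_right le_sup_left a) (mul_le_mul_right le_sup_right a))
  rw [mul_comm]
  refine (adjunction _ _ _).mpr (sup_le ((adjunction _ _ _).mp ?_) ((adjunction _ _ _).mp ?_))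
  · rw [mul_comm]; exact le_sup_left
  · rw [mul_comm]; exact le_sup_right

protected theorem sup_mul (a b c : A) : (a ⊔ b) * c = a * c ⊔ b * c := by
  rw [mul_comm, ResLattice.mul_sup, mul_comm c, mul_comm c]

theorem sup_mul_sup_le (a b x : A) : (a ⊔ x) * (b ⊔ x) ≤ a * b ⊔ x := by
  rw [ResLattice.sup_mul, ResLattice.mul_sup]
  exact sup_le (sup_le le_sup_left (le_sup_of_le_right (mul_le_right _ _)))
    (le_sup_of_le_right (mul_le_left _ _))

theorem sup_pow_add_le (a b : A) : ∀ n m : ℕ, (a ⊔ b) ^ (n + m) ≤ a ^ n ⊔ b ^ m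
  | 0, m => le_sup_of_le_left (by simpa using le_one _)
  | n + 1, 0 => le_sup_of_le_right (by simpa using le_one _)
  | n + 1, m + 1 => by
    have hexp : n + 1 + (m + 1) = (n + (m + 1)) + 1 := by omega
    have hexp' : n + (m + 1) = n + 1 + m := by omega
    calc (a ⊔ b) ^ (n + 1 + (m + 1))
        = a * (a ⊔ b) ^ (n + (m + 1)) ⊔ b * (a ⊔ b) ^ (n + 1 + m) := by
          rw [hexp, pow_succ', ResLattice.sup_mul, hexp']
      _ ≤ a * (a ^ n ⊔ b ^ (m + 1)) ⊔ b * (a ^ (n + 1) ⊔ b ^ m) :=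
          sup_le_sup (mul_le_mul_right (sup_pow_add_le a b n (m + 1)) a)
            (mul_le_mul_right (sup_pow_add_le a b (n + 1) m) b)
      _ ≤ a ^ (n + 1) ⊔ b ^ (m + 1) := by
          rw [ResLattice.mul_sup, ResLattice.mul_sup, ← pow_succ', ← pow_succ']
          exact sup_le (sup_le le_sup_left (le_sup_of_le_right (mul_le_right _ _)))
            (sup_le (le_sup_of_le_left (mul_le_right _ _)) le_sup_right)

end ResLattice

open ResLattice

theorem mem_rperp {x y : A} : y ∈ rperp x ↔ y ⊔ x = 1 := by
  simp [rperp, Coann]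

theorem coann_anti {X Y : Set A} (h : X ⊆ Y) : Coann Y ⊆ Coann X :=
  fun _ ha x hx => ha x (h hx)

theorem subset_rperp_of_mem_coann {X : Set A} {a : A} (ha : a ∈ Coann X) : X ⊆ rperp a :=
  fun x hx => mem_rperp.mpr (sup_comm x a ▸ ha x hx)

namespace IsRLFilter

variable {F : Set A}

theorem one_mem (hF : IsRLFilter F) : (1 : A) ∈ F := by
  obtain ⟨x, hx⟩ := hF.1
  simpa [sup_eq_right.mpr (le_one x)] using hF.2.2 x hx 1

theorem mem_of_le (hF : IsRLFilter F) {a b : A} (ha : a ∈ F) (h : a ≤ b) : b ∈ F :=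
  sup_eq_right.mpr h ▸ hF.2.2 a ha b

theorem mul_mem (hF : IsRLFilter F) {a b : A} (ha : a ∈ F) (hb : b ∈ F) : a * b ∈ F :=
  hF.2.1 a ha b hb

theorem pow_mem (hF : IsRLFilter F) {a : A} (ha : a ∈ F) (n : ℕ) : a ^ n ∈ F := by
  induction n with
  | zero => simpa using hF.one_mem
  | succ k ih => rw [pow_succ]; exact hF.mul_mem ih ha

end IsRLFilter

theorem isRLFilter_singleton_one : IsRLFilter ({1} : Set A) := by
  refine ⟨Set.singleton_nonempty 1, ?_, ?_⟩
  · rintro a rfl b rfl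
    simp
  · rintro a rfl b
    simp [sup_eq_left.mpr (le_one b)]

theorem isRLFilter_coann (X : Set A) : IsRLFilter (Coann X) := by
  refine ⟨⟨1, fun x _ => sup_eq_left.mpr (le_one x)⟩, ?_, ?_⟩
  · intro a ha b hb x hx
    refine sup_eq_one_of_le ?_
    simpa [ha x hx, hb x hx] using sup_mul_sup_le a b x
  · intro a ha y x hx
    refine sup_eq_one_of_le ?_
    calc (1 : A) = a ⊔ x := (ha x hx).symm
      _ ≤ a ⊔ y ⊔ x := sup_le_sup_right le_sup_left x

theorem isAlphaFilter_coann (X : Set A) : IsAlphaFilter (Coann X) :=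
  ⟨isRLFilter_coann X, fun _ ha => coann_anti (subset_rperp_of_mem_coann ha)⟩

/-- The filter generated by `F ∪ {a}`, when `F` is a filter. -/
def filterAdjoin (F : Set A) (a : A) : Set A :=
  {z | ∃ q ∈ F, ∃ n : ℕ, q * a ^ n ≤ z}

theorem subset_filterAdjoin (F : Set A) (a : A) : F ⊆ filterAdjoin F a :=
  fun q hq => ⟨q, hq, 0, by simp⟩

namespace IsRLFilter

variable {F : Set A}

theorem mem_filterAdjoin_self (hF : IsRLFilter F) (a : A) : a ∈ filterAdjoin F a :=
  ⟨1, hF.one_mem, 1, by simp⟩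

theorem adjoin (hF : IsRLFilter F) (a : A) : IsRLFilter (filterAdjoin F a) := by
  refine ⟨⟨a, hF.mem_filterAdjoin_self a⟩, ?_, ?_⟩
  · rintro z₁ ⟨q₁, hq₁, n₁, h₁⟩ z₂ ⟨q₂, hq₂, n₂, h₂⟩
    refine ⟨q₁ * q₂, hF.mul_mem hq₁ hq₂, n₁ + n₂, ?_⟩
    rw [pow_add, mul_mul_mul_comm]
    exact mul_le_mul' h₁ h₂
  · rintro z ⟨q, hq, n, h⟩ y
    exact ⟨q, hq, n, le_sup_of_le_left h⟩

theorem sup_mem_of_mem_filterAdjoin (hF : IsRLFilter F) {a b z₁ z₂ : A} (hab : a ⊔ b ∈ F)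
    (h₁ : z₁ ∈ filterAdjoin F a) (h₂ : z₂ ∈ filterAdjoin F b) : z₁ ⊔ z₂ ∈ F := by
  obtain ⟨q₁, hq₁, n, hn⟩ := h₁
  obtain ⟨q₂, hq₂, m, hm⟩ := h₂
  refine hF.mem_of_le (hF.mul_mem (hF.mul_mem hq₁ hq₂) (hF.pow_mem hab (n + m))) ?_
  calc q₁ * q₂ * (a ⊔ b) ^ (n + m)
      ≤ q₁ * q₂ * (a ^ n ⊔ b ^ m) := mul_le_mul_right (sup_pow_add_le a b n m) _
    _ = q₁ * q₂ * a ^ n ⊔ q₁ * q₂ * b ^ m := ResLattice.mul_sup _ _ _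
    _ ≤ q₁ * a ^ n ⊔ q₂ * b ^ m := by
        refine sup_le_sup (mul_le_mul_left (mul_le_left _ _) _) ?_
        exact mul_le_mul_left (mul_le_right _ _) _
    _ ≤ z₁ ⊔ z₂ := sup_le_sup hn hm

end IsRLFilter

theorem isRLPrime_of_maximal_disjoint {I : Order.Ideal A} {Q : Set A}
    (hQ : Maximal (fun G => IsRLFilter G ∧ Disjoint G I) Q) : IsRLPrime Q := by
  obtain ⟨⟨hQfil, hQI⟩, hQmax⟩ := hQ
  have meets_of_not_mem : ∀ a ∉ Q, ∃ z ∈ filterAdjoin Q a, z ∈ I := by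
    intro a ha
    by_contra! hdisj
    have hle := hQmax ⟨hQfil.adjoin a, Set.disjoint_left.mpr hdisj⟩
      (subset_filterAdjoin Q a)
    exact ha (hle (hQfil.mem_filterAdjoin_self a))
  refine ⟨hQfil, fun hQ => Set.disjoint_left.mp hQI (hQ ▸ Set.mem_univ ⊥) I.bot_mem, ?_⟩
  intro a b hab
  by_contra! hnot
  obtain ⟨z₁, hz₁, hz₁I⟩ := meets_of_not_mem a hnot.1
  obtain ⟨z₂, hz₂, hz₂I⟩ := meets_of_not_mem b hnot.2
  exact Set.disjoint_left.mp hQI (hQfil.sup_mem_of_mem_filterAdjoin hab hz₁ hz₂)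
    (I.sup_mem hz₁I hz₂I)

theorem isRLFilter_sUnion_of_isChain {c : Set (Set A)} (hc : IsChain (· ⊆ ·) c)
    (hne : c.Nonempty) (hfil : ∀ G ∈ c, IsRLFilter G) : IsRLFilter (⋃₀ c) := by
  obtain ⟨G₀, hG₀⟩ := hne
  refine ⟨⟨1, G₀, hG₀, (hfil G₀ hG₀).one_mem⟩, ?_, ?_⟩
  · rintro a ⟨G₁, hG₁, ha⟩ b ⟨G₂, hG₂, hb⟩
    rcases hc.total hG₁ hG₂ with h | h
    · exact ⟨G₂, hG₂, (hfil G₂ hG₂).mul_mem (h ha) hb⟩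
    · exact ⟨G₁, hG₁, (hfil G₁ hG₁).mul_mem ha (h hb)⟩
  · rintro a ⟨G, hG, ha⟩ b
    exact ⟨G, hG, (hfil G hG).2.2 a ha b⟩

theorem exists_isRLPrime_of_disjoint {F : Set A} (hF : IsRLFilter F) (I : Order.Ideal A)
    (hFI : Disjoint F I) : ∃ Q, IsRLPrime Q ∧ F ⊆ Q ∧ Disjoint Q I := by
  obtain ⟨Q, hFQ, hQ⟩ := zorn_subset_nonempty {G | IsRLFilter G ∧ Disjoint G I}
    (fun c hcS hc hne => ⟨⋃₀ c,
      ⟨isRLFilter_sUnion_of_isChain hc hne fun G hG => (hcS hG).1,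
        (Set.disjoint_sUnion_left (t := I)).mpr fun _ hG => (hcS hG).2⟩,
      fun _ => Set.subset_sUnion_of_mem⟩) F ⟨hF, hFI⟩
  exact ⟨Q, isRLPrime_of_maximal_disjoint hQ, hFQ, hQ.prop.2⟩

theorem IsRLPrime.isIdeal_le_sup_compl {P : Set A} (hP : IsRLPrime P) (x : A) :
    Order.IsIdeal {z | ∃ d ∉ P, z ≤ x ⊔ d} := by
  obtain ⟨d₀, hd₀⟩ := (Set.ne_univ_iff_exists_notMem P).mp hP.2.1
  refine ⟨fun a b hba ⟨d, hd, ha⟩ => ⟨d, hd, hba.trans ha⟩, ⟨x, d₀, hd₀, le_sup_left⟩,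
    SupClosed.directedOn ?_⟩
  rintro a ⟨d₁, hd₁, ha⟩ b ⟨d₂, hd₂, hb⟩
  refine ⟨d₁ ⊔ d₂, fun h => (hP.2.2 d₁ d₂ h).elim hd₁ hd₂, ?_⟩
  calc a ⊔ b ≤ (x ⊔ d₁) ⊔ (x ⊔ d₂) := sup_le_sup ha hb
    _ = x ⊔ (d₁ ⊔ d₂) := sup_sup_distrib_left x d₁ d₂ |>.symm

theorem IsRLMinPrime.exists_notMem_sup_eq_one {P : Set A} (hP : IsRLMinPrime P) {x : A}
    (hx : x ∈ P) : ∃ d ∉ P, x ⊔ d = 1 := by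
  by_contra! hcon
  let I := (hP.1.isIdeal_le_sup_compl x).toIdeal
  have hI : Disjoint ({1} : Set A) I := by
    refine Set.disjoint_left.mpr ?_
    rintro _ rfl ⟨d, hd, h1⟩
    exact hcon d hd (sup_eq_one_of_le h1)
  obtain ⟨Q, hQ, -, hQI⟩ := exists_isRLPrime_of_disjoint isRLFilter_singleton_one I hI
  have hQP : Q ⊆ P := fun q hq => by
    by_contra hqP
    exact Set.disjoint_left.mp hQI hq ⟨q, hqP, le_sup_right⟩
  obtain ⟨d₀, hd₀⟩ := (Set.ne_univ_iff_exists_notMem P).mp hP.1.2.1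
  obtain rfl := hP.2 Q hQ hQP
  exact Set.disjoint_left.mp hQI hx ⟨d₀, hd₀, le_sup_left⟩

theorem IsRLMinPrime.isAlphaFilter {P : Set A} (hP : IsRLMinPrime P) : IsAlphaFilter P := by
  refine ⟨hP.1.1, fun x hx b hb => ?_⟩
  obtain ⟨d, hdP, hxd⟩ := hP.exists_notMem_sup_eq_one hx
  have hbd : b ⊔ d = 1 := hb d (mem_rperp.mpr (sup_comm d x ▸ hxd))
  exact (hP.1.2.2 b d (hbd ▸ hP.1.1.one_mem)).resolve_right hdP

theorem stmt16 :
    (∀ X : Set A, IsAlphaFilter (Coann X)) ∧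
    (∀ P : Set A, IsRLMinPrime P → IsAlphaFilter P) :=
  ⟨isAlphaFilter_coann, fun _ hP => hP.isAlphaFilter⟩
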